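/- Let T be a bounded linear operator on L² induced by a K⁰-kernel 𝐓 satisfying condition (iv), let {βₙ} be a complex sequence with βₙ → 0, and set λₙ(λ) = λ(1 − βₙλ)⁻¹. Then for each fixed λ ∈ ∇_s({βₙI + T̃ₙ}), one has λₙ(λ) ∈ Π(Tₙ) for all sufficiently large n, and sup_{t∈ℝ} ‖𝐭′_{n|λₙ(λ)}(t) − 𝐭′_{|λ}(t)‖_{L²} → 0 as n → ∞. -/

import Mathlib

open MeasureTheory Filter Topology ContinuousLinearMap
open scoped ENNReal NNReal

noncomputable section

/-- `L²(ℝ)`, the complex Hilbert space of square-integrable functions on `ℝ`. -/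
abbrev L2 : Type := MeasureTheory.Lp ℂ 2 (MeasureTheory.volume : MeasureTheory.Measure ℝ)

/-- Bounded linear operators on `L²`. -/
abbrev L2op : Type := L2 →L[ℂ] L2

/-- `T` is the integral operator induced by the kernel `K`:
`(Tf)(s) = ∫ K(s,t) f(t) dt` for every `f ∈ L²` and almost every `s`. -/
def IsInducedBy (T : L2op) (K : ℝ → ℝ → ℂ) : Prop :=
  ∀ f : L2, ∀ᵐ s : ℝ, (T f : ℝ → ℂ) s = ∫ t : ℝ, K s t * (f : ℝ → ℂ) t

/-- `K` is a `K⁰`-kernel with associated Carleman functions `kt`, `kt'`: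
`kt s = conj (K s ·)` and `kt' s = K · s` as elements of `L²`, the kernel is
continuous and vanishes at infinity, and both Carleman functions are continuous
and vanish at infinity in `L²`-norm. -/
structure IsK0Kernel (K : ℝ → ℝ → ℂ) (kt kt' : ℝ → L2) : Prop where
  repr_t : ∀ s : ℝ, (kt s : ℝ → ℂ) =ᵐ[volume] fun x => (starRingEnd ℂ) (K s x)
  repr_t' : ∀ s : ℝ, (kt' s : ℝ → ℂ) =ᵐ[volume] fun x => K x s
  cont : Continuous fun p : ℝ × ℝ => K p.1 p.2
  vanish : Tendsto (fun p : ℝ × ℝ => K p.1 p.2) (cocompact (ℝ × ℝ)) (𝓝 0)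
  cont_t : Continuous kt
  vanish_t : Tendsto kt (cocompact ℝ) (𝓝 0)
  cont_t' : Continuous kt'
  vanish_t' : Tendsto kt' (cocompact ℝ) (𝓝 0)

/-- The set `Π(T)` of regular values of `T`: those `λ` for which `I - λT` is invertible. -/
def regularSet (T : L2op) : Set ℂ := {lam : ℂ | IsUnit (1 - lam • T)}

/-- The resolvent `R_λ(T) = (I - λT)⁻¹` (junk value `0` if `λ ∉ Π(T)`). -/
def res (T : L2op) (lam : ℂ) : L2op := Ring.inverse (1 - lam • T)

/-- The Fredholm resolvent `T_{|λ} = T R_λ(T)`. -/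
def fres (T : L2op) (lam : ℂ) : L2op := T * res T lam

/-- The region of boundedness `∇_b({Sₙ})`. -/
def nablaB (S : ℕ → L2op) : Set ℂ :=
  {ζ : ℂ | ζ ≠ 0 ∧ ∃ M : ℝ, 0 < M ∧ ∃ N : ℕ, ∀ n > N,
      ζ ∈ regularSet (S n) ∧ ‖fres (S n) ζ‖ ≤ M}

/-- The region of strong convergence `∇_s({Sₙ})`: the `ζ ∈ ∇_b({Sₙ})` such that
the Fredholm resolvents `S_{n|ζ}` converge in the strong operator topology. -/
def nablaS (S : ℕ → L2op) : Set ℂ :=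
  {ζ : ℂ | ζ ∈ nablaB S ∧
    ∀ f : L2, ∃ g : L2, Tendsto (fun n => fres (S n) ζ f) atTop (𝓝 g)}

/-- Nuclear (trace class) operator on `L²`. -/
def IsNuclear (T : L2op) : Prop :=
  ∃ g h : ℕ → L2, Summable (fun k => ‖g k‖ * ‖h k‖) ∧
    ∀ f : L2, T f = ∑' k : ℕ, (inner ℂ f (g k) : ℂ) • h k

/-- The characteristic function `χ` of the interval `(-τ, τ)`, with complex values. -/
def chi (t : ℝ) (x : ℝ) : ℂ := Set.indicator (Set.Ioo (-t) t) 1 x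

/-- Condition (iv) for a `K⁰`-kernel `K` inducing `T`: the positive reals `τ n`
strictly increase to `+∞`, `P n` is the orthogonal projection given by multiplication
by `χₙ = chi (τ n)`, the subkernels `Kₙ(s,t) = χₙ(s)K(s,t)` and
`K̃ₙ(s,t) = χₙ(s)K(s,t)χₙ(t)` are `K⁰`-kernels, and the induced operators
`Tₙ = PₙT` and `T̃ₙ = PₙTPₙ` are nuclear. -/
structure ConditionIV (K : ℝ → ℝ → ℂ) (T : L2op) (tau : ℕ → ℝ) (P : ℕ → L2op) : Prop where
  pos : ∀ n, 0 < tau n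
  mono : StrictMono tau
  tendsto_top : Tendsto tau atTop atTop
  proj : ∀ n, ∀ f : L2, (P n f : ℝ → ℂ) =ᵐ[volume] fun x => chi (tau n) x * (f : ℝ → ℂ) x
  subker : ∀ n, ∃ kt kt' : ℝ → L2, IsK0Kernel (fun s t => chi (tau n) s * K s t) kt kt'
  subker' : ∀ n, ∃ kt kt' : ℝ → L2,
      IsK0Kernel (fun s t => chi (tau n) s * K s t * chi (tau n) t) kt kt'
  nuclear : ∀ n, IsNuclear (P n * T)
  nuclear' : ∀ n, IsNuclear (P n * T * P n)

/-- `λₙ(λ) = λ(1 - βₙλ)⁻¹`. -/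
def lamn (b : ℕ → ℂ) (lam : ℂ) (n : ℕ) : ℂ := lam * (1 - b n * lam)⁻¹

/-- The resolvent kernel for `K` at `λ` built from the resolvent Carleman function
`𝐭'_{|λ}(t) = R_λ(T)(kt' t)`:  `𝐓_{|λ}(s,t) = λ⟨𝐭'_{|λ}(t), 𝐭(s)⟩ + 𝐓(s,t)`
(the paper's inner product `⟨a,b⟩ = ∫ a conj b` is `inner b a` in Mathlib). -/
def resKer (T : L2op) (K : ℝ → ℝ → ℂ) (kt kt' : ℝ → L2) (lam : ℂ) (s t : ℝ) : ℂ :=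
  lam * (inner ℂ (kt s) (res T lam (kt' t)) : ℂ) + K s t

/-- The resolvent kernel for the subkernel `Kₙ` at `λ`:
`𝐓_{n|λ}(s,t) = λ χₙ(s) ⟨𝐭'_{n|λ}(t), 𝐭(s)⟩ + 𝐓ₙ(s,t)`, where
`𝐭'_{n|λ}(t) = R_λ(Tₙ) Pₙ (kt' t)` and `𝐓ₙ(s,t) = χₙ(s) 𝐓(s,t)`. -/
def resKerN (T : L2op) (K : ℝ → ℝ → ℂ) (kt kt' : ℝ → L2) (taun : ℝ) (Pn : L2op)
    (lam : ℂ) (s t : ℝ) : ℂ :=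
  lam * chi taun s * (inner ℂ (kt s) (res (Pn * T) lam (Pn (kt' t))) : ℂ) + chi taun s * K s t

/-- `R` is a resolvent kernel for the `K⁰`-kernel `K` at `λ` (Definition 2 of the paper):
`R` is a `K⁰`-kernel satisfying the two simultaneous integral equations and the
square-integrability condition. -/
def IsResolventKernel (K : ℝ → ℝ → ℂ) (lam : ℂ) (R : ℝ → ℝ → ℂ) : Prop :=
  (∃ rt rt' : ℝ → L2, IsK0Kernel R rt rt') ∧
  (∀ s t : ℝ, R s t - lam * ∫ x : ℝ, K s x * R x t = K s t) ∧
  (∀ s t : ℝ, R s t - lam * ∫ x : ℝ, R s x * K x t = K s t) ∧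
  (∀ f : L2, ∫⁻ s : ℝ, ((‖∫ t : ℝ, R s t * (f : ℝ → ℂ) t‖₊ : ℝ≥0) : ℝ≥0∞) ^ 2 < ⊤)

/-!
Put `Sₙ = βₙ I + PₙTPₙ`. Dominated convergence gives `Pₙ → I` strongly, hence `Sₙ → T` strongly,
and `R_λ(Sₙ) = I + λ S_{n|λ}` converges strongly by the choice of `λ`. A strong limit of
resolvents of strongly convergent operators on a Banach space is the resolvent of the limit
(Banach–Steinhaus makes the convergence uniform on convergent sequences), so
`R_λ(Sₙ) → R_λ(T)` strongly.

Since `I - λSₙ = (1 - λβₙ)(I - λₙ PₙTPₙ)`, Jacobson's identity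
`(1 - ba)⁻¹ = 1 + b(1 - ab)⁻¹a` with `a = λₙPₙT`, `b = Pₙ` shows that `λₙ ∈ Π(PₙT)` and
`R_{λₙ}(PₙT)Pₙ = (1 - λβₙ) Pₙ R_λ(Sₙ)`, which therefore converges strongly to `R_λ(T)`.
Finally, strong convergence is uniform on totally bounded sets, and the range of the
Carleman function `𝐭′`, continuous and vanishing at infinity, is totally bounded.
-/

section BanachSteinhaus

variable {𝕜 E F : Type*} [NontriviallyNormedField 𝕜] [NormedAddCommGroup E] [NormedSpace 𝕜 E]
  [CompleteSpace E] [NormedAddCommGroup F] [NormedSpace 𝕜 F]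

theorem exists_norm_le_of_tendsto_apply {S : ℕ → E →L[𝕜] F}
    (hS : ∀ x, ∃ y, Tendsto (fun n => S n x) atTop (𝓝 y)) : ∃ C, ∀ n, ‖S n‖ ≤ C :=
  banach_steinhaus fun x => by
    obtain ⟨y, hy⟩ := hS x
    obtain ⟨C, hC⟩ := isBounded_iff_forall_norm_le.mp (Metric.isBounded_range_of_tendsto _ hy)
    exact ⟨C, fun n => hC _ ⟨n, rfl⟩⟩

theorem tendsto_apply_of_tendsto_pointwise {S : ℕ → E →L[𝕜] F} {T : E → F}
    (hS : ∀ x, Tendsto (fun n => S n x) atTop (𝓝 (T x))) {u : ℕ → E} {x : E}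
    (hu : Tendsto u atTop (𝓝 x)) : Tendsto (fun n => S n (u n)) atTop (𝓝 (T x)) := by
  obtain ⟨C, hC⟩ := exists_norm_le_of_tendsto_apply fun x => ⟨T x, hS x⟩
  rw [tendsto_iff_norm_sub_tendsto_zero] at hu ⊢
  have hSx := tendsto_iff_norm_sub_tendsto_zero.mp (hS x)
  refine squeeze_zero (fun n => norm_nonneg _) (fun n => ?_)
    (by simpa using (hu.const_mul C).add hSx)
  calc ‖S n (u n) - T x‖ = ‖S n (u n - x) + (S n x - T x)‖ := by rw [map_sub, sub_add_sub_cancel]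
    _ ≤ ‖S n‖ * ‖u n - x‖ + ‖S n x - T x‖ :=
      (norm_add_le _ _).trans (by gcongr; exact le_opNorm _ _)
    _ ≤ C * ‖u n - x‖ + ‖S n x - T x‖ := by gcongr; exact hC n

theorem tendstoUniformly_of_tendsto_pointwise_zero {X : Type*} {D : ℕ → E →L[𝕜] F}
    (hD : ∀ x, Tendsto (fun n => D n x) atTop (𝓝 0)) {k : X → E}
    (hk : TotallyBounded (Set.range k)) :
    TendstoUniformly (fun n t => D n (k t)) 0 atTop := by
  obtain ⟨C, hC⟩ := exists_norm_le_of_tendsto_apply fun x => ⟨0, hD x⟩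
  have hC₁ : 0 < C + 1 := by linarith [hC 0, norm_nonneg (D 0)]
  rw [Metric.tendstoUniformly_iff]
  intro ε hε
  obtain ⟨s, hs, hks⟩ := Metric.totallyBounded_iff.mp hk (ε / (2 * (C + 1))) (by positivity)
  have hnet : ∀ᶠ n in atTop, ∀ y ∈ s, ‖D n y‖ < ε / 2 :=
    (hs.eventually_all).2 fun y _ => NormedAddGroup.tendsto_nhds_zero.mp (hD y) _ (by positivity)
  filter_upwards [hnet] with n hn t
  obtain ⟨y, hy, hty⟩ := Set.mem_iUnion₂.mp (hks ⟨t, rfl⟩)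
  rw [Metric.mem_ball, dist_eq_norm] at hty
  rw [Pi.zero_apply, dist_zero_left]
  calc ‖D n (k t)‖ = ‖D n (k t - y) + D n y‖ := by rw [map_sub, sub_add_cancel]
    _ ≤ (C + 1) * ‖k t - y‖ + ‖D n y‖ :=
      (norm_add_le _ _).trans (by gcongr; exact (le_opNorm _ _).trans (by gcongr; linarith [hC n]))
    _ < (C + 1) * (ε / (2 * (C + 1))) + ε / 2 := by gcongr; exact hn y hy
    _ = ε := by field_simp; ring

end BanachSteinhaus

theorem totallyBounded_range_of_tendsto_cocompact {X α : Type*} [TopologicalSpace X]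
    [PseudoMetricSpace α] {k : X → α} {a : α} (hk : Continuous k)
    (h : Tendsto k (cocompact X) (𝓝 a)) : TotallyBounded (Set.range k) := by
  rw [Metric.totallyBounded_iff]
  intro ε hε
  obtain ⟨K, hK, hKε⟩ := mem_cocompact.mp (h (Metric.ball_mem_nhds a hε))
  obtain ⟨s, hs, hKs⟩ := Metric.totallyBounded_iff.mp (hK.image hk).totallyBounded ε hε
  refine ⟨insert a s, hs.insert a, ?_⟩
  rintro _ ⟨x, rfl⟩
  by_cases hx : x ∈ K
  · exact Set.biUnion_mono (Set.subset_insert a s) (fun _ _ => le_rfl) (hKs ⟨x, hx, rfl⟩)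
  · exact Set.mem_iUnion₂.2 ⟨a, Set.mem_insert a s, hKε hx⟩

theorem tendsto_iSup_norm_of_tendstoUniformly {ι X E : Type*} [Nonempty X]
    [SeminormedAddCommGroup E] {l : Filter ι} {F : ι → X → E} (h : TendstoUniformly F 0 l) :
    Tendsto (fun i => ⨆ x, ‖F i x‖) l (𝓝 0) := by
  rw [Metric.tendsto_nhds]
  intro ε hε
  filter_upwards [Metric.tendstoUniformly_iff.mp h (ε / 2) (half_pos hε)] with i hi
  have hle : ⨆ x, ‖F i x‖ ≤ ε / 2 :=
    ciSup_le fun x => by simpa only [Pi.zero_apply, dist_zero_left] using (hi x).le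
  rw [Real.dist_0_eq_abs, abs_of_nonneg (Real.iSup_nonneg fun _ => norm_nonneg _)]
  linarith

section Algebra

theorem one_sub_mul_comm_inverse_spec {R : Type*} [Ring R] {a b r : R}
    (h₁ : (1 - a * b) * r = 1) (h₂ : r * (1 - a * b) = 1) :
    (1 - b * a) * (1 + b * r * a) = 1 ∧ (1 + b * r * a) * (1 - b * a) = 1 ∧
      (1 + b * r * a) * b = b * r := by
  refine ⟨?_, ?_, ?_⟩
  · calc (1 - b * a) * (1 + b * r * a) = 1 - b * a + b * ((1 - a * b) * r) * a := by noncomm_ring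
      _ = 1 := by rw [h₁]; noncomm_ring
  · calc (1 + b * r * a) * (1 - b * a) = 1 - b * a + b * (r * (1 - a * b)) * a := by noncomm_ring
      _ = 1 := by rw [h₂]; noncomm_ring
  · calc (1 + b * r * a) * b = b * r + b * (1 - r * (1 - a * b)) := by noncomm_ring
      _ = b * r := by rw [h₂]; noncomm_ring

theorem Ring.inverse_one_sub_eq_one_add_mul {R : Type*} [Ring R] {a : R} (h : IsUnit (1 - a)) :
    Ring.inverse (1 - a) = 1 + a * Ring.inverse (1 - a) := by
  have h₁ := Ring.mul_inverse_cancel _ h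
  rwa [sub_mul, one_mul, sub_eq_iff_eq_add] at h₁

theorem isUnit_and_inverse_mul_of_isUnit_compression {𝕜 A : Type*} [Field 𝕜] [Ring A]
    [Algebra 𝕜 A] {p t : A} (hp : IsIdempotentElem p) {β c : 𝕜} (hβ : 1 - β * c ≠ 0)
    (h : IsUnit (1 - c • (β • 1 + p * t * p))) :
    IsUnit (1 - (c * (1 - β * c)⁻¹) • (p * t)) ∧
      Ring.inverse (1 - (c * (1 - β * c)⁻¹) • (p * t)) * p =
        (1 - c * β) • (p * Ring.inverse (1 - c • (β • 1 + p * t * p))) := by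
  set μ := c * (1 - β * c)⁻¹
  set r := Ring.inverse (1 - c • (β • 1 + p * t * p))
  have hfac : 1 - c • (β • 1 + p * t * p) = (1 - c * β) • (1 - (μ • (p * t)) * p) := by
    have hγμ : (1 - c * β) * μ = c := by
      rw [mul_comm c β, mul_left_comm, mul_inv_cancel₀ hβ, mul_one]
    rw [smul_sub, smul_mul_assoc, smul_smul, hγμ, smul_add, smul_smul, sub_smul, one_smul]
    abel
  have h₁ : (1 - (μ • (p * t)) * p) * ((1 - c * β) • r) = 1 := by
    rw [mul_smul_comm, ← smul_mul_assoc, ← hfac, Ring.mul_inverse_cancel _ h]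
  have h₂ : ((1 - c * β) • r) * (1 - (μ • (p * t)) * p) = 1 := by
    rw [smul_mul_assoc, ← mul_smul_comm, ← hfac, Ring.inverse_mul_cancel _ h]
  obtain ⟨e₁, e₂, e₃⟩ := one_sub_mul_comm_inverse_spec h₁ h₂
  have hpa : p * (μ • (p * t)) = μ • (p * t) := by rw [mul_smul_comm, ← mul_assoc, hp.eq]
  rw [hpa] at e₁ e₂
  have hinv : Ring.inverse (1 - μ • (p * t)) = 1 + p * ((1 - c * β) • r) * (μ • (p * t)) :=
    Ring.inverse_unit ⟨_, _, e₁, e₂⟩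
  exact ⟨⟨⟨_, _, e₁, e₂⟩, rfl⟩, by rw [hinv, e₃, mul_smul_comm]⟩

end Algebra

section StrongResolventConvergence

variable {𝕜 E : Type*} [NontriviallyNormedField 𝕜] [NormedAddCommGroup E] [NormedSpace 𝕜 E]
  [CompleteSpace E]

theorem isUnit_one_sub_smul_and_tendsto_inverse_apply {S : ℕ → E →L[𝕜] E} {T : E →L[𝕜] E}
    {c : 𝕜} (hS : ∀ x, Tendsto (fun n => S n x) atTop (𝓝 (T x)))
    (hunit : ∀ᶠ n in atTop, IsUnit (1 - c • S n))
    (hR : ∀ x, ∃ y, Tendsto (fun n => Ring.inverse (1 - c • S n) x) atTop (𝓝 y)) :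
    IsUnit (1 - c • T) ∧ ∀ x,
      Tendsto (fun n => Ring.inverse (1 - c • S n) x) atTop (𝓝 (Ring.inverse (1 - c • T) x)) := by
  choose B hB using hR
  let A : E →L[𝕜] E := continuousLinearMapOfTendsto _ (tendsto_pi_nhds.2 hB)
  have hA : ∀ x, Tendsto (fun n => Ring.inverse (1 - c • S n) x) atTop (𝓝 (A x)) := hB
  have hsplit : ∀ n y, (1 - c • T) y = (1 - c • S n) y + c • (S n y - T y) := fun n y => by
    simp only [sub_apply, smul_apply, smul_sub]
    abel
  have hright : (1 - c • T) * A = 1 := ext fun x => by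
    rw [mul_apply_eq_comp, one_apply_eq_self]
    have hlim : Tendsto (fun n => x + c • (S n (Ring.inverse (1 - c • S n) x)
        - T (Ring.inverse (1 - c • S n) x))) atTop (𝓝 x) := by
      simpa using ((tendsto_apply_of_tendsto_pointwise hS (hA x)).sub
        ((T.continuous.tendsto _).comp (hA x))).const_smul c |>.const_add x
    refine tendsto_nhds_unique (((1 - c • T).continuous.tendsto _).comp (hA x)) (hlim.congr' ?_)
    filter_upwards [hunit] with n hn
    have hx : (1 - c • S n) (Ring.inverse (1 - c • S n) x) = x := by
      rw [← mul_apply_eq_comp, Ring.mul_inverse_cancel _ hn, one_apply_eq_self]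
    rw [Function.comp_apply, hsplit n, hx]
  have hleft : A * (1 - c • T) = 1 := ext fun x => by
    rw [mul_apply_eq_comp, one_apply_eq_self]
    have hST : Tendsto (fun n => S n x - T x) atTop (𝓝 0) := by simpa using (hS x).sub_const (T x)
    have hlim :
        Tendsto (fun n => x + c • Ring.inverse (1 - c • S n) (S n x - T x)) atTop (𝓝 x) := by
      simpa using ((tendsto_apply_of_tendsto_pointwise hA hST).const_smul c).const_add x
    refine tendsto_nhds_unique (hA _) (hlim.congr' ?_)
    filter_upwards [hunit] with n hn
    rw [hsplit n, map_add, map_smul, ← mul_apply_eq_comp, Ring.inverse_mul_cancel _ hn,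
      one_apply_eq_self]
  have hinv : Ring.inverse (1 - c • T) = A := Ring.inverse_unit ⟨_, A, hright, hleft⟩
  exact ⟨⟨⟨_, A, hright, hleft⟩, rfl⟩, hinv ▸ hA⟩

end StrongResolventConvergence

theorem tendsto_eLpNorm_of_dominated {α E : Type*} [MeasurableSpace α] {μ : Measure α}
    [NormedAddCommGroup E] {p : ℝ≥0∞} (hp₀ : p ≠ 0) (hp : p ≠ ∞) {g : ℕ → α → E} {h : α → ℝ}
    (hg : ∀ n, AEStronglyMeasurable (g n) μ) (hh : MemLp h p μ)
    (hbound : ∀ n, ∀ᵐ x ∂μ, ‖g n x‖ ≤ h x)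
    (hlim : ∀ᵐ x ∂μ, Tendsto (fun n => g n x) atTop (𝓝 0)) :
    Tendsto (fun n => eLpNorm (g n) p μ) atTop (𝓝 0) := by
  have hpos : 0 < p.toReal := ENNReal.toReal_pos hp₀ hp
  have hrpow : ∀ {q : ℝ}, 0 < q → ContinuousAt (fun y : ℝ≥0∞ => y ^ q) 0 := fun _ =>
    ENNReal.continuous_rpow_const.continuousAt
  simp_rw [eLpNorm_eq_lintegral_rpow_enorm_toReal hp₀ hp]
  have hint : Tendsto (fun n => ∫⁻ x, ‖g n x‖ₑ ^ p.toReal ∂μ) atTop (𝓝 0) := by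
    rw [← lintegral_zero]
    exact tendsto_lintegral_of_dominated_convergence' (fun x => ‖h x‖ₑ ^ p.toReal)
      (fun n => (hg n).enorm.pow_const _)
      (fun n => (hbound n).mono fun x hx => ENNReal.rpow_le_rpow
        (enorm_le_iff_norm_le.mpr (hx.trans (Real.le_norm_self _))) ENNReal.toReal_nonneg)
      (lintegral_rpow_enorm_lt_top_of_eLpNorm_lt_top hp₀ hp hh.eLpNorm_lt_top).ne
      (hlim.mono fun x hx => by
        simpa [Function.comp_def, ENNReal.zero_rpow_of_pos hpos] using
          (hrpow hpos).tendsto.comp (by simpa using hx.enorm))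
  simpa [Function.comp_def, ENNReal.zero_rpow_of_pos (inv_pos.mpr hpos)] using
    (hrpow (inv_pos.mpr hpos)).tendsto.comp hint

theorem chi_apply (τ x : ℝ) : chi τ x = if x ∈ Set.Ioo (-τ) τ then 1 else 0 := by
  simp [chi, Set.indicator_apply]

theorem chi_mul_self (τ x : ℝ) : chi τ x * chi τ x = chi τ x := by
  rw [chi_apply]; split_ifs <;> simp

theorem norm_chi_mul_sub_le (τ x : ℝ) (z : ℂ) : ‖chi τ x * z - z‖ ≤ ‖z‖ := by
  rw [chi_apply]; split_ifs <;> simp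

theorem eventually_chi_eq_one {tau : ℕ → ℝ} (htau : Tendsto tau atTop atTop) (x : ℝ) :
    ∀ᶠ n in atTop, chi (tau n) x = 1 := by
  filter_upwards [htau.eventually_gt_atTop |x|] with n hn
  rw [chi_apply, if_pos (Set.mem_Ioo.mpr (abs_lt.mp hn))]

theorem isIdempotentElem_of_chi_mul {P : L2op} {τ : ℝ}
    (hP : ∀ f : L2, (P f : ℝ → ℂ) =ᵐ[volume] fun x => chi τ x * (f : ℝ → ℂ) x) :
    IsIdempotentElem P :=
  ext fun f => Lp.ext <| by
    filter_upwards [hP (P f), hP f] with x h₁ h₂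
    rw [mul_apply_eq_comp, h₁, h₂, ← mul_assoc, chi_mul_self]

theorem tendsto_apply_of_chi_mul {P : ℕ → L2op} {tau : ℕ → ℝ} (htau : Tendsto tau atTop atTop)
    (hP : ∀ n, ∀ f : L2, (P n f : ℝ → ℂ) =ᵐ[volume] fun x => chi (tau n) x * (f : ℝ → ℂ) x)
    (f : L2) : Tendsto (fun n => P n f) atTop (𝓝 f) := by
  have hchi : ∀ n, Measurable (chi (tau n)) := fun n =>
    measurable_const.indicator measurableSet_Ioo
  rw [Lp.tendsto_Lp_iff_tendsto_eLpNorm']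
  refine (tendsto_eLpNorm_of_dominated two_ne_zero ENNReal.ofNat_ne_top
    (g := fun n x => chi (tau n) x * (f : ℝ → ℂ) x - (f : ℝ → ℂ) x)
    (fun n => ((hchi n).aestronglyMeasurable.mul (Lp.aestronglyMeasurable f)).sub
      (Lp.aestronglyMeasurable f))
    (Lp.memLp f).norm (fun n => ae_of_all _ fun x => norm_chi_mul_sub_le _ _ _)
    (ae_of_all _ fun x => tendsto_const_nhds.congr' ?_)).congr fun n => ?_
  · filter_upwards [eventually_chi_eq_one htau x] with n hn
    rw [hn, one_mul, sub_self]
  · exact eLpNorm_congr_ae (by filter_upwards [hP n f] with x hx; rw [Pi.sub_apply, hx])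

theorem statement3_general (T : L2op) (K : ℝ → ℝ → ℂ) (kt kt' : ℝ → L2)
    (hK : IsK0Kernel K kt kt')
    (tau : ℕ → ℝ) (P : ℕ → L2op) (hiv : ConditionIV K T tau P)
    (b : ℕ → ℂ) (hb : Tendsto b atTop (𝓝 (0 : ℂ)))
    (lam : ℂ) (hlam : lam ∈ nablaS (fun n => b n • (1 : L2op) + P n * T * P n)) :
    (∀ᶠ n in atTop, lamn b lam n ∈ regularSet (P n * T)) ∧
    Tendsto (fun n => ⨆ t : ℝ,
        ‖res (P n * T) (lamn b lam n) (P n (kt' t)) - res T lam (kt' t)‖)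
      atTop (𝓝 (0 : ℝ)) := by
  obtain ⟨⟨-, _, -, N, hN⟩, hconv⟩ := hlam
  set S : ℕ → L2op := fun n => b n • 1 + P n * T * P n
  have hP := tendsto_apply_of_chi_mul hiv.tendsto_top hiv.proj
  have hS : ∀ f, Tendsto (fun n => S n f) atTop (𝓝 (T f)) := fun f => by
    simpa [S] using (hb.smul_const f).add
      (tendsto_apply_of_tendsto_pointwise hP ((T.continuous.tendsto f).comp (hP f)))
  have hunit : ∀ᶠ n in atTop, IsUnit (1 - lam • S n) :=
    eventually_atTop.2 ⟨N + 1, fun n hn => (hN n hn).1⟩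
  have hR : ∀ f, ∃ g, Tendsto (fun n => res (S n) lam f) atTop (𝓝 g) := fun f => by
    obtain ⟨g, hg⟩ := hconv f
    refine ⟨f + lam • g, (tendsto_const_nhds.add (hg.const_smul lam)).congr' ?_⟩
    filter_upwards [hunit] with n hn
    rw [res, Ring.inverse_one_sub_eq_one_add_mul hn, smul_mul_assoc]
    rfl
  obtain ⟨-, hRT⟩ := isUnit_one_sub_smul_and_tendsto_inverse_apply hS hunit hR
  have hcomp : ∀ᶠ n in atTop, lamn b lam n ∈ regularSet (P n * T) ∧
      res (P n * T) (lamn b lam n) * P n = (1 - lam * b n) • (P n * res (S n) lam) := by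
    have hβ : ∀ᶠ n in atTop, 1 - b n * lam ≠ 0 :=
      ((hb.mul_const lam).const_sub 1).eventually_ne (by simp)
    filter_upwards [hunit, hβ] with n hn hβn
    exact isUnit_and_inverse_mul_of_isUnit_compression
      (isIdempotentElem_of_chi_mul (hiv.proj n)) hβn hn
  refine ⟨hcomp.mono fun n h => h.1, ?_⟩
  have hD : ∀ f, Tendsto (fun n => (res (P n * T) (lamn b lam n) * P n - res T lam) f)
      atTop (𝓝 0) := fun f => by
    have hlim : Tendsto (fun n => (1 - lam * b n) • P n (res (S n) lam f) - res T lam f)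
        atTop (𝓝 0) := by
      simpa [res] using (((hb.const_mul lam).const_sub 1).smul
        (tendsto_apply_of_tendsto_pointwise hP (hRT f))).sub_const (res T lam f)
    refine hlim.congr' ?_
    filter_upwards [hcomp] with n hn
    rw [sub_apply, hn.2]
    rfl
  exact tendsto_iSup_norm_of_tendstoUniformly (tendstoUniformly_of_tendsto_pointwise_zero hD
    (totallyBounded_range_of_tendsto_cocompact hK.cont_t' hK.vanish_t'))

theorem statement3 (T : L2op) (K : ℝ → ℝ → ℂ) (kt kt' : ℝ → L2)
    (hK : IsK0Kernel K kt kt') (hT : IsInducedBy T K)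
    (tau : ℕ → ℝ) (P : ℕ → L2op) (hiv : ConditionIV K T tau P)
    (b : ℕ → ℂ) (hb : Tendsto b atTop (𝓝 (0 : ℂ)))
    (lam : ℂ) (hlam : lam ∈ nablaS (fun n => b n • (1 : L2op) + P n * T * P n)) :
    (∀ᶠ n in atTop, lamn b lam n ∈ regularSet (P n * T)) ∧
    Tendsto (fun n => ⨆ t : ℝ,
        ‖res (P n * T) (lamn b lam n) (P n (kt' t)) - res T lam (kt' t)‖)
      atTop (𝓝 (0 : ℝ)) :=
  statement3_general T K kt kt' hK tau P hiv b hb lam hlam
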